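/- Chain rule for a multivariate outer function: Let X, Y₀, …, Y_k and Z be real locally convex topological vector spaces. Let g₀ : X → Y₀, …, g_k : X → Y_k each have a chain differential δg_i(x;η) at the point x ∈ X in the direction η ∈ X. Let F : Y₀ × … × Y_k → Z be such that, on an open neighbourhood Ω of the point (g₀(x), …, g_k(x)), each partial chain differential δ_i F(z; ξ) exists for all z ∈ Ω and all directions ξ ∈ Y_i, and each map (z, ξ) ↦ δ_i F(z; ξ) is continuous on Ω × Y_i. Then the map u ↦ F(g₀(u), …, g_k(u)) has a chain differential at x in the direction η, equal to Σ_{i=0}^{k} δ_i F( (g₀(x), …, g_k(x)); δg_i(x;η) ). -/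

import Mathlib

open Filter Topology

/-- `f` has chain differential `v` at the point `x` in the direction `η`:
for every sequence `ηm → η` and every sequence of nonzero reals `θm → 0`,
`θm⁻¹ • (f (x + θm • ηm) - f x) → v`. -/
def HasChainDiff {X Y : Type*} [AddCommGroup X] [Module ℝ X] [TopologicalSpace X]
    [AddCommGroup Y] [Module ℝ Y] [TopologicalSpace Y]
    (f : X → Y) (x η : X) (v : Y) : Prop :=
  ∀ (ηm : ℕ → X) (θm : ℕ → ℝ), Tendsto ηm atTop (𝓝 η) → (∀ m, θm m ≠ 0) →
    Tendsto θm atTop (𝓝 (0 : ℝ)) →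
    Tendsto (fun m => (θm m)⁻¹ • (f (x + θm m • ηm m) - f x)) atTop (𝓝 v)

/-- Partial chain differential of `F` with respect to the `i`-th coordinate,
at the point `z` in the direction `ξ`. -/
def HasPartialChainDiff {ι : Type*} [DecidableEq ι] {Y : ι → Type*} {Z : Type*}
    [∀ i, AddCommGroup (Y i)] [∀ i, Module ℝ (Y i)] [∀ i, TopologicalSpace (Y i)]
    [AddCommGroup Z] [Module ℝ Z] [TopologicalSpace Z]
    (F : (∀ i, Y i) → Z) (i : ι) (z : ∀ i, Y i) (ξ : Y i) (v : Z) : Prop :=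
  HasChainDiff (fun t => F (Function.update z i t)) (z i) ξ v

/-!
Telescoping through the points that switch from `g x` to `g (x + θₘ • ηₘ)` one coordinate at a
time splits the difference quotient of the composite into `k + 1` partial difference quotients of
`F`, the `i`-th one based at a point that tends to `g x`. Each of them converges to the partial
chain differential by a mean value inclusion: a difference quotient along a segment lies in every
closed convex set containing the chain differentials along the segment, because Hahn–Banach
reduces this to the real mean value theorem. Local convexity of `Z` supplies a basis of closed
convex neighbourhoods, and continuity of `δᵢF` puts the differentials along the short segments
eventually into any of them.
-/

open Set

section Segment

variable {E Z : Type*} [AddCommGroup E] [Module ℝ E] [TopologicalSpace E]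
  [AddCommGroup Z] [Module ℝ Z] [TopologicalSpace Z]

theorem HasChainDiff.tendsto_nhdsNE {f : E → Z} {x η : E} {v : Z} (hf : HasChainDiff f x η v) :
    Tendsto (fun θ : ℝ => θ⁻¹ • (f (x + θ • η) - f x)) (𝓝[≠] 0) (𝓝 v) := by
  refine tendsto_iff_seq_tendsto.2 fun θ hθ => ?_
  -- `θ` is only eventually nonzero, so shift the sequence past its zeros.
  obtain ⟨N, hN⟩ := eventually_atTop.1 (hθ self_mem_nhdsWithin)
  rw [← tendsto_add_atTop_iff_nat N]
  exact hf (fun _ => η) (fun n => θ (n + N)) tendsto_const_nhds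
    (fun n => hN _ (Nat.le_add_left N n))
    ((tendsto_add_atTop_iff_nat N).2 (hθ.mono_right nhdsWithin_le_nhds))

theorem HasChainDiff.hasDerivAt_clm_comp_line {f : E → Z} {p h : E} {s : ℝ} {v : Z}
    (hf : HasChainDiff f (p + s • h) h v) (ℓ : Z →L[ℝ] ℝ) :
    HasDerivAt (fun t : ℝ => ℓ (f (p + t • h))) (ℓ v) s := by
  rw [hasDerivAt_iff_tendsto_slope_zero]
  refine ((ℓ.continuous.tendsto v).comp hf.tendsto_nhdsNE).congr fun θ => ?_
  simp [add_smul, add_assoc, smul_eq_mul]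

variable [IsTopologicalAddGroup Z] [ContinuousSMul ℝ Z] [LocallyConvexSpace ℝ Z]

theorem nhds_hasBasis_isClosed_convex (v : Z) :
    (𝓝 v).HasBasis (fun C => C ∈ 𝓝 v ∧ IsClosed C ∧ Convex ℝ C) id :=
  (closed_nhds_basis v).to_hasBasis
    (fun _ ⟨hD, hDclosed⟩ =>
      let ⟨C, ⟨hC, hCconv⟩, hCD⟩ := (LocallyConvexSpace.convex_basis (𝕜 := ℝ) v).mem_iff.1 hD
      ⟨closure C, ⟨mem_of_superset hC subset_closure, isClosed_closure, hCconv.closure⟩,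
        closure_minimal hCD hDclosed⟩)
    fun C hC => ⟨C, ⟨hC.1, hC.2.1⟩, subset_rfl⟩

theorem inv_smul_sub_mem_of_hasChainDiff {f : E → Z} {p h : E} {θ : ℝ} (hθ : θ ≠ 0)
    {C : Set Z} (hCclosed : IsClosed C) (hCconv : Convex ℝ C)
    (hd : ∀ t ∈ Icc (0 : ℝ) 1, ∃ v ∈ C, HasChainDiff f (p + (t * θ) • h) h v) :
    θ⁻¹ • (f (p + θ • h) - f p) ∈ C := by
  by_contra hq
  obtain ⟨ℓ, u, hℓC, hℓq⟩ := geometric_hahn_banach_closed_point hCconv hCclosed hq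
  choose! v hvC hv using hd
  set φ : ℝ → ℝ := fun t => θ⁻¹ * ℓ (f (p + (t * θ) • h))
  have hφ : ∀ t ∈ Icc (0 : ℝ) 1, HasDerivAt φ (ℓ (v t)) t := by
    intro t ht
    have := ((hv t ht).hasDerivAt_clm_comp_line ℓ).comp t ((hasDerivAt_id t).mul_const θ)
    exact (this.const_mul θ⁻¹).congr_deriv (by field_simp)
  obtain ⟨c, hc, hφc⟩ := exists_hasDerivAt_eq_slope φ (fun t => ℓ (v t)) one_pos
    (fun t ht => (hφ t ht).continuousAt.continuousWithinAt)
    fun t ht => hφ t (Ioo_subset_Icc_self ht)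
  have hℓ : ℓ (θ⁻¹ • (f (p + θ • h) - f p)) = ℓ (v c) := by
    rw [hφc]
    simp [φ, mul_sub]
  linarith [hℓC _ (hvC c (Ioo_subset_Icc_self hc))]

end Segment

section PartialChainDiff

variable {ι : Type*} [DecidableEq ι] {Y : ι → Type*} {Z : Type*}
  [∀ i, AddCommGroup (Y i)] [∀ i, Module ℝ (Y i)] [∀ i, TopologicalSpace (Y i)]
  [∀ i, ContinuousAdd (Y i)] [∀ i, ContinuousSMul ℝ (Y i)]
  [AddCommGroup Z] [Module ℝ Z] [TopologicalSpace Z]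

theorem eventually_forall_Icc_update_mem {i : ι} {z : ∀ j, Y j} {ξ : Y i}
    {N : Set ((∀ j, Y j) × Y i)} (hN : N ∈ 𝓝 (z, ξ))
    {a : ℕ → ∀ j, Y j} (ha : Tendsto a atTop (𝓝 z)) {ξm : ℕ → Y i}
    (hξ : Tendsto ξm atTop (𝓝 ξ)) {θ : ℕ → ℝ} (hθ : Tendsto θ atTop (𝓝 0)) :
    ∀ᶠ m in atTop, ∀ t ∈ Icc (0 : ℝ) 1,
      (Function.update (a m) i (z i + (t * θ m) • ξm m), ξm m) ∈ N := by
  refine (eventually_prod_principal_iff (p := fun q : ℕ × ℝ =>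
    (Function.update (a q.1) i (z i + (q.2 * θ q.1) • ξm q.1), ξm q.1) ∈ N)).1 ?_
  have hbound : ∀ᶠ q in atTop ×ˢ 𝓟 (Icc (0 : ℝ) 1), ‖q.2 * θ q.1‖ ≤ ‖θ q.1‖ :=
    eventually_prod_principal_iff.2 <| .of_forall fun m t ht => by
      rw [norm_mul]
      exact mul_le_of_le_one_left (norm_nonneg _) (by simp [abs_le, ht.2]; linarith [ht.1])
  have hs : Tendsto (fun q : ℕ × ℝ => q.2 * θ q.1) (atTop ×ˢ 𝓟 (Icc 0 1)) (𝓝 0) :=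
    squeeze_zero_norm' hbound (by simpa using (hθ.comp tendsto_fst).norm)
  have hcont : Continuous fun q : (∀ j, Y j) × Y i × ℝ =>
      (Function.update q.1 i (z i + q.2.2 • q.2.1), q.2.1) :=
    (continuous_fst.update i
      (continuous_const.add (continuous_snd.snd.smul continuous_snd.fst))).prodMk
        continuous_snd.fst
  have hlim := (hcont.tendsto' (z, ξ, 0) (z, ξ) (by simp)).comp
    ((ha.comp tendsto_fst).prodMk_nhds ((hξ.comp tendsto_fst).prodMk_nhds hs))
  exact hlim.eventually_mem hN

variable [IsTopologicalAddGroup Z] [ContinuousSMul ℝ Z] [LocallyConvexSpace ℝ Z]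

theorem tendsto_inv_smul_sub_update {F : (∀ i, Y i) → Z} {Ω : Set (∀ i, Y i)} (hΩ : IsOpen Ω)
    {i : ι} {DFi : (∀ j, Y j) → Y i → Z}
    (hDF : ∀ z ∈ Ω, ∀ ξ : Y i, HasPartialChainDiff F i z ξ (DFi z ξ))
    (hcont : ContinuousOn (fun p : (∀ j, Y j) × Y i => DFi p.1 p.2) (Ω ×ˢ univ))
    {z : ∀ j, Y j} (hz : z ∈ Ω) {ξ : Y i} {a : ℕ → ∀ j, Y j} (ha : Tendsto a atTop (𝓝 z))
    (hai : ∀ m, a m i = z i) {ξm : ℕ → Y i} (hξ : Tendsto ξm atTop (𝓝 ξ)) {θ : ℕ → ℝ}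
    (hθ : ∀ m, θ m ≠ 0) (hθ0 : Tendsto θ atTop (𝓝 0)) :
    Tendsto (fun m => (θ m)⁻¹ • (F (Function.update (a m) i (z i + θ m • ξm m)) - F (a m)))
      atTop (𝓝 (DFi z ξ)) := by
  refine (nhds_hasBasis_isClosed_convex _).tendsto_right_iff.2
    fun C ⟨hC, hCclosed, hCconv⟩ => ?_
  have hΩ' : Ω ×ˢ univ ∈ 𝓝 (z, ξ) := (hΩ.prod isOpen_univ).mem_nhds ⟨hz, trivial⟩
  have hN : Ω ×ˢ univ ∩ {p | DFi p.1 p.2 ∈ C} ∈ 𝓝 (z, ξ) :=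
    inter_mem hΩ' ((hcont.continuousAt hΩ').preimage_mem_nhds hC)
  filter_upwards [eventually_forall_Icc_update_mem hN ha hξ hθ0] with m hm
  have hdiff := inv_smul_sub_mem_of_hasChainDiff (f := fun y => F (Function.update (a m) i y))
    (hθ m) hCclosed hCconv fun t ht =>
      ⟨_, (hm t ht).2, by simpa [HasPartialChainDiff] using hDF _ (hm t ht).1.1 (ξm m)⟩
  simpa [← hai m] using hdiff

end PartialChainDiff

section MixCoords

variable {n : ℕ} {Y : Fin n → Type*}

def mixCoords (p q : ∀ j, Y j) (l : ℕ) : ∀ j, Y j := fun j => if (j : ℕ) < l then q j else p j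

@[simp]
theorem mixCoords_zero (p q : ∀ j, Y j) : mixCoords p q 0 = p := by
  funext j; simp [mixCoords]

@[simp]
theorem mixCoords_self (p : ∀ j, Y j) (l : ℕ) : mixCoords p p l = p := by
  funext j; simp [mixCoords]

theorem mixCoords_of_le (p q : ∀ j, Y j) {l : ℕ} (hl : n ≤ l) : mixCoords p q l = q := by
  funext j; simp [mixCoords, j.isLt.trans_le hl]

theorem mixCoords_apply_self (p q : ∀ j, Y j) (i : Fin n) : mixCoords p q i i = p i := by
  simp [mixCoords]

theorem mixCoords_succ (p q : ∀ j, Y j) (i : Fin n) :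
    mixCoords p q (i + 1) = Function.update (mixCoords p q i) i (q i) := by
  funext j
  rcases eq_or_ne j i with rfl | hji
  · simp [mixCoords]
  · have : (j : ℕ) ≠ i := Fin.val_ne_of_ne hji
    simp only [mixCoords, Function.update_of_ne hji]
    exact if_congr (by omega) rfl rfl

theorem sub_eq_sum_mixCoords {M : Type*} [AddCommGroup M] (F : (∀ j, Y j) → M)
    (p q : ∀ j, Y j) :
    F q - F p = ∑ i : Fin n, (F (mixCoords p q (i + 1)) - F (mixCoords p q i)) := by
  rw [Fin.sum_univ_eq_sum_range (fun l => F (mixCoords p q (l + 1)) - F (mixCoords p q l)),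
    Finset.sum_range_sub (fun l => F (mixCoords p q l)), mixCoords_of_le p q le_rfl,
    mixCoords_zero]

theorem continuous_mixCoords [∀ j, TopologicalSpace (Y j)] (p : ∀ j, Y j) (l : ℕ) :
    Continuous fun q => mixCoords p q l :=
  continuous_pi fun j => by
    unfold mixCoords
    split_ifs
    exacts [continuous_apply j, continuous_const]

end MixCoords

theorem chain_rule_multivariate_outer_general
    {X : Type*} {k : ℕ} {Y : Fin (k + 1) → Type*} {Z : Type*}
    [AddCommGroup X] [Module ℝ X] [TopologicalSpace X]
    [∀ i, AddCommGroup (Y i)] [∀ i, Module ℝ (Y i)] [∀ i, TopologicalSpace (Y i)]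
    [∀ i, IsTopologicalAddGroup (Y i)] [∀ i, ContinuousSMul ℝ (Y i)]
    [AddCommGroup Z] [Module ℝ Z] [TopologicalSpace Z] [IsTopologicalAddGroup Z]
    [ContinuousSMul ℝ Z] [LocallyConvexSpace ℝ Z]
    (g : ∀ i, X → Y i) (x η : X) (Dg : ∀ i, Y i)
    (hg : ∀ i, HasChainDiff (g i) x η (Dg i))
    (F : (∀ i, Y i) → Z)
    (Ω : Set (∀ i, Y i)) (hΩ : IsOpen Ω) (hgx : (fun i => g i x) ∈ Ω)
    (DF : ∀ i, (∀ j, Y j) → Y i → Z)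
    (hDF : ∀ i, ∀ z ∈ Ω, ∀ ξ : Y i, HasPartialChainDiff F i z ξ (DF i z ξ))
    (hDFcont : ∀ i, ContinuousOn (fun p : (∀ j, Y j) × Y i => DF i p.1 p.2)
      (Ω ×ˢ (Set.univ : Set (Y i)))) :
    HasChainDiff (fun u => F (fun i => g i u)) x η
      (∑ i, DF i (fun j => g j x) (Dg i)) := by
  intro ηm θ hηm hθ hθ0
  set z : ∀ j, Y j := fun j => g j x
  set q : ℕ → ∀ j, Y j := fun m j => g j (x + θ m • ηm m)
  set ξ : ℕ → ∀ j, Y j := fun m j => (θ m)⁻¹ • (q m j - z j)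
  have hξ : ∀ j, Tendsto (fun m => ξ m j) atTop (𝓝 (Dg j)) := fun j => hg j ηm θ hηm hθ hθ0
  have hq : ∀ m j, q m j = z j + θ m • ξ m j := fun m j => by
    simp [ξ, smul_inv_smul₀ (hθ m)]
  have hqz : Tendsto q atTop (𝓝 z) := tendsto_pi_nhds.2 fun j => by
    simpa [hq] using tendsto_const_nhds.add (hθ0.smul (hξ j))
  have hterm : ∀ i : Fin (k + 1), Tendsto (fun m => (θ m)⁻¹ •
      (F (mixCoords z (q m) (i + 1)) - F (mixCoords z (q m) i))) atTop (𝓝 (DF i z (Dg i))) := by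
    intro i
    refine (tendsto_inv_smul_sub_update hΩ (hDF i) (hDFcont i) hgx
      ((continuous_mixCoords z i).tendsto' z z (mixCoords_self z i) |>.comp hqz)
      (fun m => mixCoords_apply_self z (q m) i) (hξ i) hθ hθ0).congr fun m => ?_
    simp only [Function.comp_apply, mixCoords_succ, hq]
  refine (tendsto_finsetSum _ fun i _ => hterm i).congr fun m => ?_
  rw [← Finset.smul_sum, ← sub_eq_sum_mixCoords]

/-- Chain rule for a multivariate outer function. -/
theorem chain_rule_multivariate_outer
    {X : Type*} {k : ℕ} {Y : Fin (k + 1) → Type*} {Z : Type*}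
    [AddCommGroup X] [Module ℝ X] [TopologicalSpace X] [IsTopologicalAddGroup X]
    [ContinuousSMul ℝ X] [LocallyConvexSpace ℝ X]
    [∀ i, AddCommGroup (Y i)] [∀ i, Module ℝ (Y i)] [∀ i, TopologicalSpace (Y i)]
    [∀ i, IsTopologicalAddGroup (Y i)] [∀ i, ContinuousSMul ℝ (Y i)]
    [∀ i, LocallyConvexSpace ℝ (Y i)]
    [AddCommGroup Z] [Module ℝ Z] [TopologicalSpace Z] [IsTopologicalAddGroup Z]
    [ContinuousSMul ℝ Z] [LocallyConvexSpace ℝ Z]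
    (g : ∀ i, X → Y i) (x η : X) (Dg : ∀ i, Y i)
    (hg : ∀ i, HasChainDiff (g i) x η (Dg i))
    (F : (∀ i, Y i) → Z)
    (Ω : Set (∀ i, Y i)) (hΩ : IsOpen Ω) (hgx : (fun i => g i x) ∈ Ω)
    (DF : ∀ i, (∀ j, Y j) → Y i → Z)
    (hDF : ∀ i, ∀ z ∈ Ω, ∀ ξ : Y i, HasPartialChainDiff F i z ξ (DF i z ξ))
    (hDFcont : ∀ i, ContinuousOn (fun p : (∀ j, Y j) × Y i => DF i p.1 p.2)
      (Ω ×ˢ (Set.univ : Set (Y i)))) :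
    HasChainDiff (fun u => F (fun i => g i u)) x η
      (∑ i, DF i (fun j => g j x) (Dg i)) :=
  chain_rule_multivariate_outer_general g x η Dg hg F Ω hΩ hgx DF hDF hDFcont
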